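/- Assume 0.9·d_{i0} ≤ d_i ≤ 1.1·d_{i0} for every i, 0.9·d_0 ≤ d ≤ 1.1·d_0, ρ ≥ d² + 2‖e‖², 0 < ε ≤ 1/15, the Local RIP holds, and ‖𝒜*(e)‖ ≤ εd_0/(10√2·sκ). Let z_1 = (h^{(1)},x^{(1)}) and z_2 = (h^{(2)},x^{(2)}) be points of ℂ^{Ks}×ℂ^{Ns} and set z(λ) = (1−λ)z_1 + λz_2. If z_1 ∈ 𝒩_ε and z(λ) ∈ 𝒩_F̃ for every λ ∈ [0,1], then z_2 ∈ 𝒩_ε. -/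

import Mathlib

/-!
Continuous induction along the segment: the set of `λ ∈ [0,1]` with `z(λ) ∈ 𝒩_ε` contains `0`
and is closed, and it is open in `[0,1]` because on `𝒩_F̃ ∩ 𝒩_ε` the bound `δᵢ ≤ ε` is
automatically strict. For that, the regularizer confines the point to `𝒩_d ∩ 𝒩_μ`, where the
local RIP and the bound on `‖𝒜*(e)‖` turn `F ≤ F̃` into
`‖ℋ(h,x) − X₀‖_F < ε d₀ / (√s κ) ≤ ε d_{i0}`.
-/

noncomputable section
open Finset ComplexConjugate

namespace RGD

/-- Squared Euclidean norm of a complex vector. -/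
def vnormSq {n : ℕ} (v : Fin n → ℂ) : ℝ := ∑ j, ‖v j‖ ^ 2

/-- Euclidean norm of a complex vector. -/
def vnorm {n : ℕ} (v : Fin n → ℂ) : ℝ := Real.sqrt (vnormSq v)

/-- Inner product, conjugate-linear in the first argument. -/
def vinner {n : ℕ} (u v : Fin n → ℂ) : ℂ := ∑ j, conj (u j) * v j

/-- Squared Frobenius norm of a matrix. -/
def frobSq {K N : ℕ} (Z : Matrix (Fin K) (Fin N) ℂ) : ℝ := ∑ k, ∑ j, ‖Z k j‖ ^ 2

/-- Frobenius norm of a matrix. -/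
def frob {K N : ℕ} (Z : Matrix (Fin K) (Fin N) ℂ) : ℝ := Real.sqrt (frobSq Z)

/-- Frobenius inner product `⟨U,V⟩ = Tr(U*V)`, conjugate-linear in the first argument. -/
def finner {K N : ℕ} (U V : Matrix (Fin K) (Fin N) ℂ) : ℂ := ∑ k, ∑ j, conj (U k j) * V k j

/-- Spectral (operator) norm of a matrix: sup of `‖Zv‖` over the closed unit ball. -/
def opNorm {K N : ℕ} (Z : Matrix (Fin K) (Fin N) ℂ) : ℝ :=
  sSup {r : ℝ | ∃ v : Fin N → ℂ, vnorm v ≤ 1 ∧ r = vnorm (Z.mulVec v)}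

/-- Squared Frobenius norm of a block-diagonal matrix, given by its diagonal blocks. -/
def famFrobSq {K N s : ℕ} (Z : Fin s → Matrix (Fin K) (Fin N) ℂ) : ℝ := ∑ i, frobSq (Z i)

/-- Frobenius norm of a block-diagonal matrix, given by its diagonal blocks. -/
def famFrob {K N s : ℕ} (Z : Fin s → Matrix (Fin K) (Fin N) ℂ) : ℝ := Real.sqrt (famFrobSq Z)

/-- The rank-one matrix `u v*`. -/
def rankOne {K N : ℕ} (u : Fin K → ℂ) (v : Fin N → ℂ) : Matrix (Fin K) (Fin N) ℂ :=
  Matrix.of fun k j => u k * conj (v j)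

/-- `ℋ(h,x)`: block-diagonal matrix with `i`-th block `hᵢ xᵢ*`. -/
def Hmap {K N s : ℕ} (h : Fin s → Fin K → ℂ) (x : Fin s → Fin N → ℂ) :
    Fin s → Matrix (Fin K) (Fin N) ℂ := fun i => rankOne (h i) (x i)

/-- `𝒜ᵢ(Z) = (bₗ* Z aₗ)ₗ`. -/
def calAi {K N L : ℕ} (b : Fin L → Fin K → ℂ) (a : Fin L → Fin N → ℂ)
    (Z : Matrix (Fin K) (Fin N) ℂ) : Fin L → ℂ :=
  fun l => vinner (b l) (Z.mulVec (a l))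

/-- `𝒜(Z) = Σᵢ 𝒜ᵢ(Zᵢ)` on block-diagonal matrices. -/
def calA {K N L s : ℕ} (b : Fin L → Fin K → ℂ) (a : Fin s → Fin L → Fin N → ℂ)
    (Z : Fin s → Matrix (Fin K) (Fin N) ℂ) : Fin L → ℂ :=
  fun l => ∑ i, calAi b (a i) (Z i) l

/-- `𝒜ᵢ*(z) = Σₗ zₗ bₗ aₗ*`. -/
def calAdj {K N L : ℕ} (b : Fin L → Fin K → ℂ) (a : Fin L → Fin N → ℂ)
    (z : Fin L → ℂ) : Matrix (Fin K) (Fin N) ℂ :=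
  Matrix.of fun k j => ∑ l, z l * b l k * conj (a l j)

/-- `‖𝒜*(e)‖ = maxᵢ ‖𝒜ᵢ*(e)‖` (operator norms). -/
def AadjNorm {K N L s : ℕ} (b : Fin L → Fin K → ℂ) (a : Fin s → Fin L → Fin N → ℂ)
    (e : Fin L → ℂ) : ℝ :=
  ⨆ i : Fin s, opNorm (calAdj b (a i) e)

/-- `B*B = I_K`, expressed in terms of the columns `bₗ` of `B*`. -/
def BtBeqI {K L : ℕ} (b : Fin L → Fin K → ℂ) : Prop :=
  ∀ k k' : Fin K, (∑ l, b l k * conj (b l k')) = if k = k' then (1 : ℂ) else 0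

/-- `μ ≥ μ_h`, i.e. `√L ‖B h_{i0}‖_∞ ≤ μ ‖h_{i0}‖` for all `i`. -/
def muhLe {K L s : ℕ} (b : Fin L → Fin K → ℂ) (h0 : Fin s → Fin K → ℂ) (μ : ℝ) : Prop :=
  ∀ i l, Real.sqrt L * ‖vinner (b l) (h0 i)‖ ≤ μ * vnorm (h0 i)

/-- `d₀ = √(Σᵢ d_{i0}²)`. -/
def dtot {s : ℕ} (d0 : Fin s → ℝ) : ℝ := Real.sqrt (∑ i, d0 i ^ 2)

/-- Condition number `κ = (maxᵢ d_{i0}) / (minᵢ d_{i0})`. -/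
def kappa {s : ℕ} (d0 : Fin s → ℝ) : ℝ := (⨆ i, d0 i) / (⨅ i, d0 i)

/-- The observation `y = 𝒜(ℋ(h₀,x₀)) + e`. -/
def yvec {K N L s : ℕ} (b : Fin L → Fin K → ℂ) (a : Fin s → Fin L → Fin N → ℂ)
    (h0 : Fin s → Fin K → ℂ) (x0 : Fin s → Fin N → ℂ) (e : Fin L → ℂ) : Fin L → ℂ :=
  fun l => calA b a (Hmap h0 x0) l + e l

/-- `F(h,x) = ‖𝒜(ℋ(h,x)) − y‖²`. -/
def Fobj {K N L s : ℕ} (b : Fin L → Fin K → ℂ) (a : Fin s → Fin L → Fin N → ℂ)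
    (h0 : Fin s → Fin K → ℂ) (x0 : Fin s → Fin N → ℂ) (e : Fin L → ℂ)
    (h : Fin s → Fin K → ℂ) (x : Fin s → Fin N → ℂ) : ℝ :=
  vnormSq (fun l => calA b a (Hmap h x) l - yvec b a h0 x0 e l)

def G0 (z : ℝ) : ℝ := max (z - 1) 0 ^ 2

def G0' (z : ℝ) : ℝ := 2 * max (z - 1) 0

/-- The `i`-th regularizer `Gᵢ(hᵢ,xᵢ)` (including the factor `ρ`). -/
def Gi {K N L : ℕ} (b : Fin L → Fin K → ℂ) (ρ μ di : ℝ)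
    (hi : Fin K → ℂ) (xi : Fin N → ℂ) : ℝ :=
  ρ * (G0 (vnormSq hi / (2 * di)) + G0 (vnormSq xi / (2 * di))
    + ∑ l, G0 ((L : ℝ) * ‖vinner (b l) hi‖ ^ 2 / (8 * di * μ ^ 2)))

/-- The regularizer `G(h,x) = Σᵢ Gᵢ(hᵢ,xᵢ)`. -/
def Greg {K N L s : ℕ} (b : Fin L → Fin K → ℂ) (ρ μ : ℝ) (dd : Fin s → ℝ)
    (h : Fin s → Fin K → ℂ) (x : Fin s → Fin N → ℂ) : ℝ :=
  ∑ i, Gi b ρ μ (dd i) (h i) (x i)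

/-- `F̃ = F + G`. -/
def Ftil {K N L s : ℕ} (b : Fin L → Fin K → ℂ) (a : Fin s → Fin L → Fin N → ℂ)
    (h0 : Fin s → Fin K → ℂ) (x0 : Fin s → Fin N → ℂ) (e : Fin L → ℂ)
    (ρ μ : ℝ) (dd : Fin s → ℝ)
    (h : Fin s → Fin K → ℂ) (x : Fin s → Fin N → ℂ) : ℝ :=
  Fobj b a h0 x0 e h x + Greg b ρ μ dd h x

/-- The residual `𝒜(ℋ(h,x)) − y`. -/
def residual {K N L s : ℕ} (b : Fin L → Fin K → ℂ) (a : Fin s → Fin L → Fin N → ℂ)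
    (h0 : Fin s → Fin K → ℂ) (x0 : Fin s → Fin N → ℂ) (e : Fin L → ℂ)
    (h : Fin s → Fin K → ℂ) (x : Fin s → Fin N → ℂ) : Fin L → ℂ :=
  fun l => calA b a (Hmap h x) l - yvec b a h0 x0 e l

/-- Wirtinger gradient `∇F_{hᵢ} = 𝒜ᵢ*(𝒜(ℋ(h,x)) − y) xᵢ`. -/
def gradFh {K N L s : ℕ} (b : Fin L → Fin K → ℂ) (a : Fin s → Fin L → Fin N → ℂ)
    (h0 : Fin s → Fin K → ℂ) (x0 : Fin s → Fin N → ℂ) (e : Fin L → ℂ)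
    (h : Fin s → Fin K → ℂ) (x : Fin s → Fin N → ℂ) (i : Fin s) : Fin K → ℂ :=
  (calAdj b (a i) (residual b a h0 x0 e h x)).mulVec (x i)

/-- Wirtinger gradient `∇F_{xᵢ} = (𝒜ᵢ*(𝒜(ℋ(h,x)) − y))* hᵢ`. -/
def gradFx {K N L s : ℕ} (b : Fin L → Fin K → ℂ) (a : Fin s → Fin L → Fin N → ℂ)
    (h0 : Fin s → Fin K → ℂ) (x0 : Fin s → Fin N → ℂ) (e : Fin L → ℂ)
    (h : Fin s → Fin K → ℂ) (x : Fin s → Fin N → ℂ) (i : Fin s) : Fin N → ℂ :=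
  (calAdj b (a i) (residual b a h0 x0 e h x)).conjTranspose.mulVec (h i)

/-- Wirtinger gradient `∇G_{hᵢ}`. -/
def gradGh {K L s : ℕ} (b : Fin L → Fin K → ℂ) (ρ μ : ℝ) (dd : Fin s → ℝ)
    (h : Fin s → Fin K → ℂ) (i : Fin s) : Fin K → ℂ :=
  fun k => ((ρ / (2 * dd i) : ℝ) : ℂ) *
    (((G0' (vnormSq (h i) / (2 * dd i)) : ℝ) : ℂ) * h i k
      + (((L : ℝ) / (4 * μ ^ 2) : ℝ) : ℂ) *
        ∑ l, ((G0' ((L : ℝ) * ‖vinner (b l) (h i)‖ ^ 2 / (8 * dd i * μ ^ 2)) : ℝ) : ℂ)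
          * (vinner (b l) (h i) * b l k))

/-- Wirtinger gradient `∇G_{xᵢ}`. -/
def gradGx {N s : ℕ} (ρ : ℝ) (dd : Fin s → ℝ)
    (x : Fin s → Fin N → ℂ) (i : Fin s) : Fin N → ℂ :=
  fun j => ((ρ / (2 * dd i) : ℝ) : ℂ) * (((G0' (vnormSq (x i) / (2 * dd i)) : ℝ) : ℂ) * x i j)

/-- `∇F̃_{hᵢ} = ∇F_{hᵢ} + ∇G_{hᵢ}`. -/
def gradH {K N L s : ℕ} (b : Fin L → Fin K → ℂ) (a : Fin s → Fin L → Fin N → ℂ)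
    (h0 : Fin s → Fin K → ℂ) (x0 : Fin s → Fin N → ℂ) (e : Fin L → ℂ)
    (ρ μ : ℝ) (dd : Fin s → ℝ)
    (h : Fin s → Fin K → ℂ) (x : Fin s → Fin N → ℂ) (i : Fin s) : Fin K → ℂ :=
  fun k => gradFh b a h0 x0 e h x i k + gradGh b ρ μ dd h i k

/-- `∇F̃_{xᵢ} = ∇F_{xᵢ} + ∇G_{xᵢ}`. -/
def gradX {K N L s : ℕ} (b : Fin L → Fin K → ℂ) (a : Fin s → Fin L → Fin N → ℂ)
    (h0 : Fin s → Fin K → ℂ) (x0 : Fin s → Fin N → ℂ) (e : Fin L → ℂ)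
    (ρ μ : ℝ) (dd : Fin s → ℝ)
    (h : Fin s → Fin K → ℂ) (x : Fin s → Fin N → ℂ) (i : Fin s) : Fin N → ℂ :=
  fun j => gradFx b a h0 x0 e h x i j + gradGx ρ dd x i j

/-- `‖∇F̃(h,x)‖²` (squared norm of the stacked Wirtinger gradient). -/
def gradNormSq {K N L s : ℕ} (b : Fin L → Fin K → ℂ) (a : Fin s → Fin L → Fin N → ℂ)
    (h0 : Fin s → Fin K → ℂ) (x0 : Fin s → Fin N → ℂ) (e : Fin L → ℂ)
    (ρ μ : ℝ) (dd : Fin s → ℝ)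
    (h : Fin s → Fin K → ℂ) (x : Fin s → Fin N → ℂ) : ℝ :=
  ∑ i, vnormSq (gradH b a h0 x0 e ρ μ dd h x i) + ∑ i, vnormSq (gradX b a h0 x0 e ρ μ dd h x i)

/-- `‖∇F̃(h',x') − ∇F̃(h,x)‖²`. -/
def gradDiffNormSq {K N L s : ℕ} (b : Fin L → Fin K → ℂ) (a : Fin s → Fin L → Fin N → ℂ)
    (h0 : Fin s → Fin K → ℂ) (x0 : Fin s → Fin N → ℂ) (e : Fin L → ℂ)
    (ρ μ : ℝ) (dd : Fin s → ℝ)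
    (h : Fin s → Fin K → ℂ) (x : Fin s → Fin N → ℂ)
    (h' : Fin s → Fin K → ℂ) (x' : Fin s → Fin N → ℂ) : ℝ :=
  ∑ i, vnormSq (fun k => gradH b a h0 x0 e ρ μ dd h' x' i k - gradH b a h0 x0 e ρ μ dd h x i k)
  + ∑ i, vnormSq (fun j => gradX b a h0 x0 e ρ μ dd h' x' i j - gradX b a h0 x0 e ρ μ dd h x i j)

/-- Membership in `𝒩_d`. -/
def inNd {K N s : ℕ} (d0 : Fin s → ℝ)
    (h : Fin s → Fin K → ℂ) (x : Fin s → Fin N → ℂ) : Prop :=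
  ∀ i, vnorm (h i) ≤ 2 * Real.sqrt (d0 i) ∧ vnorm (x i) ≤ 2 * Real.sqrt (d0 i)

/-- Membership in `𝒩_μ`. -/
def inNmu {K L s : ℕ} (b : Fin L → Fin K → ℂ) (d0 : Fin s → ℝ) (μ : ℝ)
    (h : Fin s → Fin K → ℂ) : Prop :=
  ∀ i, ∀ l, Real.sqrt L * ‖vinner (b l) (h i)‖ ≤ 4 * Real.sqrt (d0 i) * μ

/-- `δᵢ(hᵢ,xᵢ) = ‖hᵢxᵢ* − h_{i0}x_{i0}*‖_F / d_{i0}`. -/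
def deltaI {K N : ℕ} (h0i : Fin K → ℂ) (x0i : Fin N → ℂ) (d0i : ℝ)
    (hi : Fin K → ℂ) (xi : Fin N → ℂ) : ℝ :=
  frob (rankOne hi xi - rankOne h0i x0i) / d0i

/-- Membership in `𝒩_ε`. -/
def inNeps {K N s : ℕ} (h0 : Fin s → Fin K → ℂ) (x0 : Fin s → Fin N → ℂ)
    (d0 : Fin s → ℝ) (ε : ℝ)
    (h : Fin s → Fin K → ℂ) (x : Fin s → Fin N → ℂ) : Prop :=
  ∀ i, deltaI (h0 i) (x0 i) (d0 i) (h i) (x i) ≤ ε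

/-- The global relative error `δ(h,x) = ‖ℋ(h,x) − X₀‖_F / d₀`. -/
def deltaTot {K N s : ℕ} (h0 : Fin s → Fin K → ℂ) (x0 : Fin s → Fin N → ℂ)
    (d0 : Fin s → ℝ)
    (h : Fin s → Fin K → ℂ) (x : Fin s → Fin N → ℂ) : ℝ :=
  famFrob (fun i => Hmap h x i - Hmap h0 x0 i) / dtot d0

/-- Membership in `𝒩_F̃`. -/
def inNF {K N L s : ℕ} (b : Fin L → Fin K → ℂ) (a : Fin s → Fin L → Fin N → ℂ)
    (h0 : Fin s → Fin K → ℂ) (x0 : Fin s → Fin N → ℂ) (e : Fin L → ℂ)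
    (d0 : Fin s → ℝ) (ρ μ : ℝ) (dd : Fin s → ℝ) (ε : ℝ)
    (h : Fin s → Fin K → ℂ) (x : Fin s → Fin N → ℂ) : Prop :=
  Ftil b a h0 x0 e ρ μ dd h x ≤ ε ^ 2 * dtot d0 ^ 2 / (3 * (s : ℝ) * kappa d0 ^ 2) + vnormSq e

/-- The Local Restricted Isometry Property on `𝒩_d ∩ 𝒩_μ ∩ 𝒩_ε`. -/
def LocalRIP {K N L s : ℕ} (b : Fin L → Fin K → ℂ) (a : Fin s → Fin L → Fin N → ℂ)
    (h0 : Fin s → Fin K → ℂ) (x0 : Fin s → Fin N → ℂ)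
    (d0 : Fin s → ℝ) (μ ε : ℝ) : Prop :=
  ∀ (h : Fin s → Fin K → ℂ) (x : Fin s → Fin N → ℂ),
    inNd d0 h x → inNmu b d0 μ h → inNeps h0 x0 d0 ε h x →
      (2 / 3) * famFrobSq (fun i => Hmap h x i - Hmap h0 x0 i)
          ≤ vnormSq (calA b a fun i => Hmap h x i - Hmap h0 x0 i)
      ∧ vnormSq (calA b a fun i => Hmap h x i - Hmap h0 x0 i)
          ≤ (3 / 2) * famFrobSq (fun i => Hmap h x i - Hmap h0 x0 i)

/-- `α_{i1} = ⟨h_{i0}, hᵢ⟩ / d_{i0}`. -/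
def alpha1 {K s : ℕ} (h0 : Fin s → Fin K → ℂ) (d0 : Fin s → ℝ)
    (h : Fin s → Fin K → ℂ) (i : Fin s) : ℂ :=
  vinner (h0 i) (h i) / ((d0 i : ℝ) : ℂ)

/-- `α_{i2} = ⟨x_{i0}, xᵢ⟩ / d_{i0}`. -/
def alpha2 {N s : ℕ} (x0 : Fin s → Fin N → ℂ) (d0 : Fin s → ℝ)
    (x : Fin s → Fin N → ℂ) (i : Fin s) : ℂ :=
  vinner (x0 i) (x i) / ((d0 i : ℝ) : ℂ)

/-- `δ₀ = δ/10`. -/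
def delta0 {K N s : ℕ} (h0 : Fin s → Fin K → ℂ) (x0 : Fin s → Fin N → ℂ)
    (d0 : Fin s → ℝ) (h : Fin s → Fin K → ℂ) (x : Fin s → Fin N → ℂ) : ℝ :=
  deltaTot h0 x0 d0 h x / 10

/-- `αᵢ = (1−δ₀)α_{i1}` if `‖hᵢ‖ ≥ ‖xᵢ‖`, else `1/((1−δ₀) conj(α_{i2}))`. -/
def alphaC {K N s : ℕ} (h0 : Fin s → Fin K → ℂ) (x0 : Fin s → Fin N → ℂ)
    (d0 : Fin s → ℝ) (h : Fin s → Fin K → ℂ) (x : Fin s → Fin N → ℂ) (i : Fin s) : ℂ :=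
  if vnorm (x i) ≤ vnorm (h i)
  then ((1 - delta0 h0 x0 d0 h x : ℝ) : ℂ) * alpha1 h0 d0 h i
  else 1 / (((1 - delta0 h0 x0 d0 h x : ℝ) : ℂ) * conj (alpha2 x0 d0 x i))

/-- `Δhᵢ = hᵢ − αᵢ h_{i0}`. -/
def dh {K N s : ℕ} (h0 : Fin s → Fin K → ℂ) (x0 : Fin s → Fin N → ℂ)
    (d0 : Fin s → ℝ) (h : Fin s → Fin K → ℂ) (x : Fin s → Fin N → ℂ) (i : Fin s) :
    Fin K → ℂ :=
  fun k => h i k - alphaC h0 x0 d0 h x i * h0 i k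

/-- `Δxᵢ = xᵢ − conj(αᵢ)⁻¹ x_{i0}`. -/
def dx {K N s : ℕ} (h0 : Fin s → Fin K → ℂ) (x0 : Fin s → Fin N → ℂ)
    (d0 : Fin s → ℝ) (h : Fin s → Fin K → ℂ) (x : Fin s → Fin N → ℂ) (i : Fin s) :
    Fin N → ℂ :=
  fun j => x i j - (conj (alphaC h0 x0 d0 h x i))⁻¹ * x0 i j

/-- `σ²_max(h,x) = maxₗ Σᵢ |bₗ*hᵢ|² ‖xᵢ‖²`. -/
def sigmaMaxSq {K N L s : ℕ} (b : Fin L → Fin K → ℂ)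
    (h : Fin s → Fin K → ℂ) (x : Fin s → Fin N → ℂ) : ℝ :=
  ⨆ l : Fin L, ∑ i, ‖vinner (b l) (h i)‖ ^ 2 * vnormSq (x i)

/-- The rank-one bound (Lemma: `𝒜` on block-diagonal matrices with rank-1 blocks). -/
def RankOneBound {K N L s : ℕ} (b : Fin L → Fin K → ℂ)
    (a : Fin s → Fin L → Fin N → ℂ) : Prop :=
  ∀ (h : Fin s → Fin K → ℂ) (x : Fin s → Fin N → ℂ),
    vnormSq (calA b a (Hmap h x)) ≤
      4 / 3 * famFrobSq (Hmap h x)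
      + 2 * Real.sqrt (2 * (s : ℝ) * famFrobSq (Hmap h x) * sigmaMaxSq b h x
          * ((K : ℝ) + N) * Real.log L)
      + 8 * (s : ℝ) * sigmaMaxSq b h x * ((K : ℝ) + N) * Real.log L

/-- The subspace `Tᵢ = {h_{i0} v* + u x_{i0}*}`. -/
def Tspace {K N : ℕ} (h0i : Fin K → ℂ) (x0i : Fin N → ℂ) :
    Set (Matrix (Fin K) (Fin N) ℂ) :=
  {Z | ∃ (u : Fin K → ℂ) (v : Fin N → ℂ), Z = rankOne h0i v + rankOne u x0i}

/-- `P` is the orthogonal projection onto `Tᵢ` w.r.t. the Frobenius inner product. -/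
def IsFrobProj {K N : ℕ} (h0i : Fin K → ℂ) (x0i : Fin N → ℂ)
    (P : Matrix (Fin K) (Fin N) ℂ → Matrix (Fin K) (Fin N) ℂ) : Prop :=
  ∀ Z, P Z ∈ Tspace h0i x0i ∧ ∀ W ∈ Tspace h0i x0i, finner W (Z - P Z) = 0

/-- Operator norm of `𝒜ᵢ` from `(ℂ^{K×N}, ‖·‖_F)` to `(ℂ^L, ‖·‖)`. -/
def calAiOpNorm {K N L : ℕ} (b : Fin L → Fin K → ℂ) (a : Fin L → Fin N → ℂ) : ℝ :=
  sSup {r : ℝ | ∃ Z : Matrix (Fin K) (Fin N) ℂ, frob Z ≤ 1 ∧ r = vnorm (calAi b a Z)}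

/-- Operator norm of `𝒜` from block-diagonal matrices with `‖·‖_F` to `ℂ^L`. -/
def calAOpNorm {K N L s : ℕ} (b : Fin L → Fin K → ℂ)
    (a : Fin s → Fin L → Fin N → ℂ) : ℝ :=
  sSup {r : ℝ | ∃ Z : Fin s → Matrix (Fin K) (Fin N) ℂ, famFrob Z ≤ 1 ∧ r = vnorm (calA b a Z)}

/-- Norm of a stacked vector in `ℂ^{ns}`. -/
def stackNorm {n s : ℕ} (u : Fin s → Fin n → ℂ) : ℝ := Real.sqrt (∑ i, vnormSq (u i))

/-- Norm of a point `z = (h,x) ∈ ℂ^{s(K+N)}`. -/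
def pairNorm {K N s : ℕ} (u : Fin s → Fin K → ℂ) (v : Fin s → Fin N → ℂ) : ℝ :=
  Real.sqrt (∑ i, vnormSq (u i) + ∑ i, vnormSq (v i))

/-- `z + t • w` componentwise, `t` real. -/
def shiftV {n s : ℕ} (u w : Fin s → Fin n → ℂ) (t : ℝ) : Fin s → Fin n → ℂ :=
  fun i k => u i k + (t : ℂ) * w i k

/-- `σ_max(h) = maxₗ √(Σᵢ |bₗ*hᵢ|²)` (unit `xᵢ`'s). -/
def sigmaMaxU {K L s : ℕ} (b : Fin L → Fin K → ℂ) (h : Fin s → Fin K → ℂ) : ℝ :=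
  ⨆ l, Real.sqrt (∑ i, ‖vinner (b l) (h i)‖ ^ 2)

section Norms

variable {n K N : ℕ}

lemma vnormSq_nonneg (v : Fin n → ℂ) : 0 ≤ vnormSq v :=
  Finset.sum_nonneg fun _ _ => sq_nonneg _

lemma vnorm_nonneg (v : Fin n → ℂ) : 0 ≤ vnorm v := Real.sqrt_nonneg _

lemma vnorm_sq (v : Fin n → ℂ) : vnorm v ^ 2 = vnormSq v :=
  Real.sq_sqrt (vnormSq_nonneg v)

lemma vnorm_eq_norm_toLp (v : Fin n → ℂ) : vnorm v = ‖WithLp.toLp 2 v‖ := by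
  rw [EuclideanSpace.norm_eq]; rfl

lemma vinner_eq_inner_toLp (u v : Fin n → ℂ) :
    vinner u v = inner ℂ (WithLp.toLp 2 u) (WithLp.toLp 2 v) := by
  rw [PiLp.inner_apply]
  exact Finset.sum_congr rfl fun j _ => by simp [RCLike.inner_apply, mul_comm]

lemma norm_vinner_le (u v : Fin n → ℂ) : ‖vinner u v‖ ≤ vnorm u * vnorm v := by
  rw [vinner_eq_inner_toLp, vnorm_eq_norm_toLp, vnorm_eq_norm_toLp]
  exact norm_inner_le_norm _ _

lemma vnorm_real_smul {c : ℝ} (hc : 0 ≤ c) (v : Fin n → ℂ) :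
    vnorm (fun j => (c : ℂ) * v j) = c * vnorm v := by
  simp only [vnorm, vnormSq, norm_mul, Complex.norm_real, Real.norm_of_nonneg hc, mul_pow,
    ← Finset.mul_sum]
  rw [Real.sqrt_mul (sq_nonneg c), Real.sqrt_sq hc]

lemma frobSq_nonneg (Z : Matrix (Fin K) (Fin N) ℂ) : 0 ≤ frobSq Z :=
  Finset.sum_nonneg fun _ _ => Finset.sum_nonneg fun _ _ => sq_nonneg _

lemma frob_nonneg (Z : Matrix (Fin K) (Fin N) ℂ) : 0 ≤ frob Z := Real.sqrt_nonneg _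

lemma frob_sq (Z : Matrix (Fin K) (Fin N) ℂ) : frob Z ^ 2 = frobSq Z :=
  Real.sq_sqrt (frobSq_nonneg Z)

lemma famFrob_sq {s : ℕ} (Z : Fin s → Matrix (Fin K) (Fin N) ℂ) : famFrob Z ^ 2 = famFrobSq Z :=
  Real.sq_sqrt (Finset.sum_nonneg fun _ _ => frobSq_nonneg _)

lemma vnormSq_mulVec_le (M : Matrix (Fin K) (Fin N) ℂ) (v : Fin N → ℂ) :
    vnormSq (M.mulVec v) ≤ frobSq M * vnormSq v := by
  unfold vnormSq frobSq
  rw [Finset.sum_mul]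
  refine Finset.sum_le_sum fun k _ => ?_
  have hrow : M.mulVec v k = vinner (fun j => conj (M k j)) v := by
    simp [Matrix.mulVec, dotProduct, vinner]
  have hcs := pow_le_pow_left₀ (norm_nonneg _) (norm_vinner_le (fun j => conj (M k j)) v) 2
  rw [mul_pow, vnorm_sq, vnorm_sq] at hcs
  simpa [hrow, vnormSq] using hcs

lemma opNorm_bddAbove (M : Matrix (Fin K) (Fin N) ℂ) :
    BddAbove {r : ℝ | ∃ v : Fin N → ℂ, vnorm v ≤ 1 ∧ r = vnorm (M.mulVec v)} := by
  refine ⟨frob M, ?_⟩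
  rintro r ⟨v, hv, rfl⟩
  calc vnorm (M.mulVec v) ≤ frob M * vnorm v := by
        rw [vnorm, vnorm, frob, ← Real.sqrt_mul (frobSq_nonneg M)]
        exact Real.sqrt_le_sqrt (vnormSq_mulVec_le M v)
    _ ≤ frob M := mul_le_of_le_one_right (frob_nonneg M) hv

lemma opNorm_nonneg (M : Matrix (Fin K) (Fin N) ℂ) : 0 ≤ opNorm M :=
  le_csSup_of_le (opNorm_bddAbove M) ⟨0, by simp [vnorm, vnormSq], rfl⟩ (Real.sqrt_nonneg _)

lemma vnorm_mulVec_le_opNorm (M : Matrix (Fin K) (Fin N) ℂ) (v : Fin N → ℂ) :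
    vnorm (M.mulVec v) ≤ opNorm M * vnorm v := by
  rcases (vnorm_nonneg v).eq_or_lt with hv | hv
  · have hv' : vnormSq v = 0 := by rw [← vnorm_sq, ← hv]; ring
    have hMv : vnormSq (M.mulVec v) = 0 :=
      le_antisymm (by simpa [hv'] using vnormSq_mulVec_le M v) (vnormSq_nonneg _)
    rw [vnorm, hMv, Real.sqrt_zero, ← hv, mul_zero]
  · have hunit : vnorm (M.mulVec fun j => (((vnorm v)⁻¹ : ℝ) : ℂ) * v j) ≤ opNorm M := by
      refine le_csSup (opNorm_bddAbove M) ⟨_, ?_, rfl⟩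
      rw [vnorm_real_smul (inv_nonneg.2 hv.le), inv_mul_cancel₀ hv.ne']
    have hlin : (M.mulVec fun j => (((vnorm v)⁻¹ : ℝ) : ℂ) * v j)
        = fun k => (((vnorm v)⁻¹ : ℝ) : ℂ) * M.mulVec v k := by
      funext k
      simp only [Matrix.mulVec, dotProduct, Finset.mul_sum]
      exact Finset.sum_congr rfl fun j _ => by ring
    rw [hlin, vnorm_real_smul (inv_nonneg.2 hv.le), inv_mul_le_iff₀ hv] at hunit
    linarith

end Norms

section RankOne

variable {K N : ℕ}

lemma frobSq_rankOne (u : Fin K → ℂ) (v : Fin N → ℂ) :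
    frobSq (rankOne u v) = vnormSq u * vnormSq v := by
  simp [frobSq, rankOne, vnormSq, Finset.sum_mul_sum, mul_pow]

lemma finner_rankOne (M : Matrix (Fin K) (Fin N) ℂ) (u : Fin K → ℂ) (v : Fin N → ℂ) :
    finner M (rankOne u v) = conj (vinner u (M.mulVec v)) := by
  simp only [finner, rankOne, vinner, Matrix.mulVec, dotProduct, Matrix.of_apply,
    map_sum, map_mul, Complex.conj_conj, Finset.mul_sum]
  exact Finset.sum_congr rfl fun k _ => Finset.sum_congr rfl fun j _ => by ring

lemma norm_finner_rankOne_le (M : Matrix (Fin K) (Fin N) ℂ) (u : Fin K → ℂ) (v : Fin N → ℂ) :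
    ‖finner M (rankOne u v)‖ ≤ opNorm M * (vnorm u * vnorm v) := by
  rw [finner_rankOne, RCLike.norm_conj]
  calc ‖vinner u (M.mulVec v)‖ ≤ vnorm u * vnorm (M.mulVec v) := norm_vinner_le _ _
    _ ≤ vnorm u * (opNorm M * vnorm v) :=
        mul_le_mul_of_nonneg_left (vnorm_mulVec_le_opNorm M v) (Real.sqrt_nonneg _)
    _ = opNorm M * (vnorm u * vnorm v) := by ring

lemma finner_rankOne_rankOne (u u' : Fin K → ℂ) (v v' : Fin N → ℂ) :
    finner (rankOne u v) (rankOne u' v') = vinner u u' * conj (vinner v v') := by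
  simp only [finner, rankOne, vinner, Matrix.of_apply, map_sum, map_mul, Complex.conj_conj,
    Finset.sum_mul_sum]
  exact Finset.sum_congr rfl fun k _ => Finset.sum_congr rfl fun j _ => by ring

lemma frobSq_add_of_finner_eq_zero {A B : Matrix (Fin K) (Fin N) ℂ} (h : finner A B = 0) :
    frobSq (A + B) = frobSq A + frobSq B := by
  have hexp : frobSq (A + B) = frobSq A + frobSq B + 2 * (finner A B).re := by
    simp only [frobSq, finner, Complex.re_sum, Finset.mul_sum, ← Finset.sum_add_distrib]
    refine Finset.sum_congr rfl fun k _ => Finset.sum_congr rfl fun j _ => ?_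
    rw [Matrix.add_apply, ← Complex.normSq_eq_norm_sq, ← Complex.normSq_eq_norm_sq,
      ← Complex.normSq_eq_norm_sq, Complex.normSq_add]
    simp only [Complex.mul_re, Complex.conj_re, Complex.conj_im]
    ring
  rw [hexp, h, Complex.zero_re, mul_zero, add_zero]

lemma frobSq_rankOne_add_rankOne (u v : Fin K → ℂ) {q w : Fin N → ℂ} (hqw : vinner q w = 0) :
    frobSq (rankOne u q + rankOne v w) = vnormSq u * vnormSq q + vnormSq v * vnormSq w := by
  rw [frobSq_add_of_finner_eq_zero (by rw [finner_rankOne_rankOne, hqw, map_zero, mul_zero]),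
    frobSq_rankOne, frobSq_rankOne]

/-- The pieces give `|⟨M, Z⟩| ≤ ‖M‖ (‖u‖‖q‖ + ‖v‖‖w‖)`, while orthogonality gives
`‖Z‖_F² = ‖u‖²‖q‖² + ‖v‖²‖w‖²`; the `√2` is Cauchy–Schwarz in `ℝ²`. -/
lemma norm_finner_rankOne_add_rankOne_le (M : Matrix (Fin K) (Fin N) ℂ) (u v : Fin K → ℂ)
    {q w : Fin N → ℂ} (hqw : vinner q w = 0) :
    ‖finner M (rankOne u q + rankOne v w)‖
      ≤ Real.sqrt 2 * opNorm M * frob (rankOne u q + rankOne v w) := by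
  set A := vnorm u * vnorm q
  set B := vnorm v * vnorm w
  have hA : 0 ≤ A := mul_nonneg (Real.sqrt_nonneg _) (Real.sqrt_nonneg _)
  have hB : 0 ≤ B := mul_nonneg (Real.sqrt_nonneg _) (Real.sqrt_nonneg _)
  have hfrob : frob (rankOne u q + rankOne v w) = Real.sqrt (A ^ 2 + B ^ 2) := by
    rw [frob, frobSq_rankOne_add_rankOne u v hqw, mul_pow, mul_pow, vnorm_sq, vnorm_sq,
      vnorm_sq, vnorm_sq]
  have hAB : A + B ≤ Real.sqrt 2 * Real.sqrt (A ^ 2 + B ^ 2) := by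
    rw [← Real.sqrt_mul zero_le_two, Real.le_sqrt (by positivity) (by positivity)]
    nlinarith [sq_nonneg (A - B)]
  have hM := opNorm_nonneg M
  calc ‖finner M (rankOne u q + rankOne v w)‖
      ≤ ‖finner M (rankOne u q)‖ + ‖finner M (rankOne v w)‖ := by
        rw [show finner M (rankOne u q + rankOne v w)
            = finner M (rankOne u q) + finner M (rankOne v w) by
          simp [finner, mul_add, Finset.sum_add_distrib]]
        exact norm_add_le _ _
    _ ≤ opNorm M * A + opNorm M * B :=
        add_le_add (norm_finner_rankOne_le M u q) (norm_finner_rankOne_le M v w)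
    _ ≤ Real.sqrt 2 * opNorm M * frob (rankOne u q + rankOne v w) := by
        rw [hfrob]; nlinarith [mul_le_mul_of_nonneg_left hAB hM]

/-- Split `q₀ = c q + w` with `w ⊥ q` (for `q = 0` the junk value `c = 0` still works). -/
lemma exists_rankOne_sub_rankOne_eq (p p₀ : Fin K → ℂ) (q q₀ : Fin N → ℂ) :
    ∃ (u v : Fin K → ℂ) (w : Fin N → ℂ), vinner q w = 0 ∧
      rankOne p q - rankOne p₀ q₀ = rankOne u q + rankOne v w := by
  set c : ℂ := vinner q q₀ / (vnormSq q : ℂ)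
  refine ⟨fun k => p k - conj c * p₀ k, fun k => -p₀ k, fun j => q₀ j - c * q j, ?_, ?_⟩
  · have hqq : vinner q q = (vnormSq q : ℂ) := by
      simp only [vinner, vnormSq, Complex.ofReal_sum, Complex.ofReal_pow]
      exact Finset.sum_congr rfl fun j _ => by rw [mul_comm, Complex.mul_conj']
    have hsplit : vinner q (fun j => q₀ j - c * q j) = vinner q q₀ - c * vinner q q := by
      simp only [vinner, mul_sub, Finset.sum_sub_distrib, Finset.mul_sum]
      congr 1; exact Finset.sum_congr rfl fun j _ => by ring
    rw [hsplit, hqq]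
    by_cases hq : vnormSq q = 0
    · have : ‖vinner q q₀‖ ≤ 0 := by
        simpa [vnorm, hq] using norm_vinner_le q q₀
      simp [hq, norm_le_zero_iff.1 this]
    · rw [div_mul_cancel₀ _ (by exact_mod_cast hq), sub_self]
  · ext k j
    simp only [rankOne, Matrix.sub_apply, Matrix.add_apply, Matrix.of_apply, map_sub, map_mul]
    ring

lemma norm_finner_rankOne_sub_rankOne_le (M : Matrix (Fin K) (Fin N) ℂ) (p p₀ : Fin K → ℂ)
    (q q₀ : Fin N → ℂ) :
    ‖finner M (rankOne p q - rankOne p₀ q₀)‖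
      ≤ Real.sqrt 2 * opNorm M * frob (rankOne p q - rankOne p₀ q₀) := by
  obtain ⟨u, v, w, hqw, hsplit⟩ := exists_rankOne_sub_rankOne_eq p p₀ q q₀
  rw [hsplit]
  exact norm_finner_rankOne_add_rankOne_le M u v hqw

end RankOne

section Measurement

variable {K N L s : ℕ} (b : Fin L → Fin K → ℂ) (a : Fin s → Fin L → Fin N → ℂ)

lemma vinner_calAi (a : Fin L → Fin N → ℂ) (e : Fin L → ℂ) (Z : Matrix (Fin K) (Fin N) ℂ) :
    vinner e (calAi b a Z) = finner (calAdj b a e) Z := by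
  simp only [vinner, calAi, finner, calAdj, Matrix.of_apply, Matrix.mulVec, dotProduct,
    map_sum, map_mul, Complex.conj_conj, Finset.mul_sum, Finset.sum_mul]
  rw [Finset.sum_comm]
  refine Finset.sum_congr rfl fun l _ => ?_
  rw [Finset.sum_comm]
  exact Finset.sum_congr rfl fun k _ => Finset.sum_congr rfl fun j _ => by ring

lemma vinner_calA (e : Fin L → ℂ) (Z : Fin s → Matrix (Fin K) (Fin N) ℂ) :
    vinner e (calA b a Z) = ∑ i, finner (calAdj b (a i) e) (Z i) := by
  simp only [vinner, calA, Finset.mul_sum]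
  rw [Finset.sum_comm]
  exact Finset.sum_congr rfl fun i _ => vinner_calAi b (a i) e (Z i)

lemma calA_sub (Z W : Fin s → Matrix (Fin K) (Fin N) ℂ) (l : Fin L) :
    calA b a (fun i => Z i - W i) l = calA b a Z l - calA b a W l := by
  simp only [calA, calAi, Matrix.sub_mulVec, vinner, Pi.sub_apply, mul_sub,
    Finset.sum_sub_distrib]

lemma Fobj_eq (h0 : Fin s → Fin K → ℂ) (x0 : Fin s → Fin N → ℂ) (e : Fin L → ℂ)
    (h : Fin s → Fin K → ℂ) (x : Fin s → Fin N → ℂ) :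
    Fobj b a h0 x0 e h x
      = vnormSq (calA b a fun i => Hmap h x i - Hmap h0 x0 i) + vnormSq e
        - 2 * (vinner e (calA b a fun i => Hmap h x i - Hmap h0 x0 i)).re := by
  set u := calA b a fun i => Hmap h x i - Hmap h0 x0 i
  have hres : (fun l => calA b a (Hmap h x) l - yvec b a h0 x0 e l) = fun l => u l - e l := by
    funext l
    simp only [u, yvec, calA_sub]
    ring
  rw [Fobj, hres]
  simp only [vnormSq, vinner, Complex.re_sum, Finset.mul_sum,
    ← Finset.sum_add_distrib, ← Finset.sum_sub_distrib]
  refine Finset.sum_congr rfl fun l _ => ?_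
  rw [← Complex.normSq_eq_norm_sq, ← Complex.normSq_eq_norm_sq, ← Complex.normSq_eq_norm_sq,
    Complex.normSq_sub]
  simp only [Complex.mul_re, Complex.conj_re, Complex.conj_im]
  ring

lemma AadjNorm_nonneg (e : Fin L → ℂ) : 0 ≤ AadjNorm b a e :=
  Real.iSup_nonneg fun _ => opNorm_nonneg _

lemma opNorm_calAdj_le_AadjNorm (e : Fin L → ℂ) (i : Fin s) :
    opNorm (calAdj b (a i) e) ≤ AadjNorm b a e :=
  le_ciSup (Set.finite_range fun i => opNorm (calAdj b (a i) e)).bddAbove i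

lemma sum_le_sqrt_card_mul_sqrt_sum_sq (f : Fin s → ℝ) (hf : ∀ i, 0 ≤ f i) :
    ∑ i, f i ≤ Real.sqrt s * Real.sqrt (∑ i, f i ^ 2) := by
  rw [← Real.sqrt_mul (Nat.cast_nonneg s), Real.le_sqrt (Finset.sum_nonneg fun i _ => hf i)
    (by positivity)]
  simpa using sq_sum_le_card_mul_sum_sq (s := Finset.univ) (f := f)

lemma norm_vinner_calA_Hmap_sub_le (h0 h : Fin s → Fin K → ℂ) (x0 x : Fin s → Fin N → ℂ)
    (e : Fin L → ℂ) :
    ‖vinner e (calA b a fun i => Hmap h x i - Hmap h0 x0 i)‖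
      ≤ Real.sqrt 2 * AadjNorm b a e
        * (Real.sqrt s * famFrob fun i => Hmap h x i - Hmap h0 x0 i) := by
  set X := fun i => Hmap h x i - Hmap h0 x0 i
  have hblock : ∀ i, ‖finner (calAdj b (a i) e) (X i)‖
      ≤ Real.sqrt 2 * AadjNorm b a e * frob (X i) := fun i =>
    (norm_finner_rankOne_sub_rankOne_le _ _ _ _ _).trans <|
      mul_le_mul_of_nonneg_right
        (mul_le_mul_of_nonneg_left (opNorm_calAdj_le_AadjNorm b a e i) (Real.sqrt_nonneg 2))
        (frob_nonneg _)
  have hsum : ∑ i, frob (X i) ≤ Real.sqrt s * famFrob X := by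
    simpa only [famFrob, famFrobSq, frob_sq] using
      sum_le_sqrt_card_mul_sqrt_sum_sq (fun i => frob (X i)) fun i => frob_nonneg _
  rw [vinner_calA]
  calc ‖∑ i, finner (calAdj b (a i) e) (X i)‖
      ≤ ∑ i, Real.sqrt 2 * AadjNorm b a e * frob (X i) :=
        (norm_sum_le _ _).trans (Finset.sum_le_sum fun i _ => hblock i)
    _ ≤ _ := by
        rw [← Finset.mul_sum]
        exact mul_le_mul_of_nonneg_left hsum
          (mul_nonneg (Real.sqrt_nonneg 2) (AadjNorm_nonneg b a e))

end Measurement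

section Regularizer

lemma G0_nonneg (z : ℝ) : 0 ≤ G0 z := sq_nonneg _

lemma le_of_G0_le_sq {t c : ℝ} (hc : 0 ≤ c) (h : G0 t ≤ c ^ 2) : t ≤ 1 + c := by
  have hmax := (pow_le_pow_iff_left₀ (le_max_right _ _) hc two_ne_zero).1 h
  linarith [le_max_left (t - 1) 0]

variable {K N L s : ℕ} (b : Fin L → Fin K → ℂ) {ρ μ : ℝ}

lemma G0_le_of_Gi_le {di c : ℝ} (hρ : 0 < ρ) {hi : Fin K → ℂ} {xi : Fin N → ℂ}
    (hG : Gi b ρ μ di hi xi ≤ ρ * c) :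
    G0 (vnormSq hi / (2 * di)) ≤ c ∧ G0 (vnormSq xi / (2 * di)) ≤ c ∧
      ∀ l, G0 ((L : ℝ) * ‖vinner (b l) hi‖ ^ 2 / (8 * di * μ ^ 2)) ≤ c := by
  have hsum := le_of_mul_le_mul_left hG hρ
  have hh := G0_nonneg (vnormSq hi / (2 * di))
  have hx := G0_nonneg (vnormSq xi / (2 * di))
  have hl := fun l => Finset.single_le_sum
    (f := fun l => G0 ((L : ℝ) * ‖vinner (b l) hi‖ ^ 2 / (8 * di * μ ^ 2)))
    (fun l _ => G0_nonneg _) (Finset.mem_univ l)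
  have hS : 0 ≤ ∑ l, G0 ((L : ℝ) * ‖vinner (b l) hi‖ ^ 2 / (8 * di * μ ^ 2)) :=
    Finset.sum_nonneg fun _ _ => G0_nonneg _
  exact ⟨by linarith, by linarith, fun l => by linarith [hl l]⟩

lemma Gi_nonneg (hρ : 0 ≤ ρ) (di : ℝ) (hi : Fin K → ℂ) (xi : Fin N → ℂ) :
    0 ≤ Gi b ρ μ di hi xi :=
  mul_nonneg hρ <| add_nonneg (add_nonneg (G0_nonneg _) (G0_nonneg _))
    (Finset.sum_nonneg fun _ _ => G0_nonneg _)

lemma Gi_le_Greg (hρ : 0 ≤ ρ) (dd : Fin s → ℝ) (h : Fin s → Fin K → ℂ)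
    (x : Fin s → Fin N → ℂ) (i : Fin s) :
    Gi b ρ μ (dd i) (h i) (x i) ≤ Greg b ρ μ dd h x :=
  Finset.single_le_sum (f := fun i => Gi b ρ μ (dd i) (h i) (x i))
    (fun _ _ => Gi_nonneg b hρ _ _ _) (Finset.mem_univ i)

/-- Each hinge term is then at most `(3/4)²`, so its argument is at most `7/4`, and
`2 · 1.1 · 7/4 ≤ 4`, `8 · 1.1 · 7/4 ≤ 16`. -/
lemma mem_Nd_and_Nmu_of_Greg_le {d0 dd : Fin s → ℝ} (hd0 : ∀ i, 0 < d0 i)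
    (hdd : ∀ i, 0.9 * d0 i ≤ dd i ∧ dd i ≤ 1.1 * d0 i) (hμ : 0 < μ) (hρ : 0 < ρ)
    {h : Fin s → Fin K → ℂ} {x : Fin s → Fin N → ℂ} (hG : Greg b ρ μ dd h x ≤ ρ / 2) :
    inNd d0 h x ∧ inNmu b d0 μ h := by
  have hGi : ∀ i, Gi b ρ μ (dd i) (h i) (x i) ≤ ρ * (3 / 4) ^ 2 := fun i =>
    (Gi_le_Greg b hρ.le dd h x i).trans (by linarith)
  have hG0 := fun i => G0_le_of_Gi_le b hρ (hGi i)
  have hdd0 : ∀ i, 0 < dd i := fun i => by linarith [hd0 i, (hdd i).1]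
  have hnorm : ∀ {n} (v : Fin n → ℂ) (i : Fin s),
      G0 (vnormSq v / (2 * dd i)) ≤ (3 / 4) ^ 2 → vnorm v ≤ 2 * Real.sqrt (d0 i) := by
    intro n v i hv
    have h1 := le_of_G0_le_sq (by norm_num) hv
    rw [div_le_iff₀ (by linarith [hdd0 i])] at h1
    rw [vnorm, show 2 * Real.sqrt (d0 i) = Real.sqrt (4 * d0 i) by
      rw [Real.sqrt_mul' _ (hd0 i).le, show (4 : ℝ) = 2 ^ 2 by norm_num,
        Real.sqrt_sq zero_le_two]]
    exact Real.sqrt_le_sqrt (by linarith [(hdd i).2, hd0 i])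
  refine ⟨fun i => ⟨hnorm _ i (hG0 i).1, hnorm _ i (hG0 i).2.1⟩, fun i l => ?_⟩
  have h1 := le_of_G0_le_sq (by norm_num) ((hG0 i).2.2 l)
  rw [div_le_iff₀ (by have := hdd0 i; positivity)] at h1
  have h2 : (L : ℝ) * ‖vinner (b l) (h i)‖ ^ 2 ≤ 16 * d0 i * μ ^ 2 := by
    nlinarith [(hdd i).2, sq_nonneg μ]
  rw [← pow_le_pow_iff_left₀ (by positivity) (by have := hd0 i; positivity) two_ne_zero,
    mul_pow, mul_pow, mul_pow, Real.sq_sqrt (Nat.cast_nonneg L), Real.sq_sqrt (hd0 i).le]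
  linarith

end Regularizer

section Gap

variable {s : ℕ} (d0 : Fin s → ℝ)

lemma le_dtot (i : Fin s) : d0 i ≤ dtot d0 :=
  (le_abs_self _).trans <| Real.abs_le_sqrt <|
    Finset.single_le_sum (f := fun j => d0 j ^ 2) (fun _ _ => sq_nonneg _) (Finset.mem_univ i)

lemma dtot_le_sqrt_card_mul_kappa_mul (hd0 : ∀ i, 0 < d0 i) (i : Fin s) :
    dtot d0 ≤ Real.sqrt s * (kappa d0 * d0 i) := by
  have : Nonempty (Fin s) := ⟨i⟩
  obtain ⟨j₀, hj₀⟩ := exists_eq_ciInf_of_finite (f := d0)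
  have hκ : 0 ≤ kappa d0 :=
    div_nonneg ((hd0 i).le.trans (le_ciSup (Set.finite_range d0).bddAbove i)) (hj₀ ▸ (hd0 j₀).le)
  have hmax : ∀ j, d0 j ≤ kappa d0 * d0 i := fun j =>
    calc d0 j ≤ ⨆ j, d0 j := le_ciSup (Set.finite_range d0).bddAbove j
      _ = kappa d0 * ⨅ j, d0 j := by rw [kappa, div_mul_cancel₀ _ (hj₀ ▸ (hd0 j₀).ne')]
      _ ≤ kappa d0 * d0 i :=
        mul_le_mul_of_nonneg_left (ciInf_le (Set.finite_range d0).bddBelow i) hκ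
  rw [dtot, ← Real.sqrt_sq (mul_nonneg hκ (hd0 i).le), ← Real.sqrt_mul (Nat.cast_nonneg s)]
  refine Real.sqrt_le_sqrt ?_
  calc ∑ j, d0 j ^ 2 ≤ ∑ _j : Fin s, (kappa d0 * d0 i) ^ 2 :=
        Finset.sum_le_sum fun j _ => pow_le_pow_left₀ (hd0 j).le (hmax j) 2
    _ = s * (kappa d0 * d0 i) ^ 2 := by simp

lemma one_le_sqrt_card_mul_kappa (hd0 : ∀ i, 0 < d0 i) (i : Fin s) :
    1 ≤ Real.sqrt s * kappa d0 := by
  by_contra! h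
  nlinarith [dtot_le_sqrt_card_mul_kappa_mul d0 hd0 i, le_dtot d0 i, hd0 i]

lemma lt_of_quadratic_bound {t P : ℝ} (hP : 0 < P) (h : 2 / 3 * t ^ 2 ≤ P ^ 2 / 3 + P * t / 5) :
    t < P := by
  by_contra! ht
  nlinarith [mul_le_mul_of_nonneg_left ht hP.le]

variable {K N L : ℕ}

/-- With `P = ε d₀ / (√s κ)` the radius of `𝒩_F̃` is `P²/3 + ‖e‖²`, and the local RIP and the
bound on `‖𝒜*(e)‖` turn `F ≤ P²/3 + ‖e‖²` into `(2/3) t² ≤ P²/3 + P t / 5` for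
`t = ‖ℋ(h,x) − X₀‖_F`. -/
lemma famFrob_Hmap_sub_lt_of_mem_NF_of_mem_Neps (hs : 0 < s) (b : Fin L → Fin K → ℂ)
    (a : Fin s → Fin L → Fin N → ℂ) (h0 : Fin s → Fin K → ℂ) (x0 : Fin s → Fin N → ℂ)
    (hd0 : ∀ i, 0 < d0 i) (e : Fin L → ℂ) {μ ρ d ε : ℝ} {dd : Fin s → ℝ}
    (hμ : 0 < μ) (hε : 0 < ε) (hε15 : ε ≤ 1 / 15)
    (hdd : ∀ i, 0.9 * d0 i ≤ dd i ∧ dd i ≤ 1.1 * d0 i)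
    (hdlow : 0.9 * dtot d0 ≤ d) (hρ : d ^ 2 + 2 * vnormSq e ≤ ρ)
    (hRIP : LocalRIP b a h0 x0 d0 μ ε)
    (hAe : AadjNorm b a e ≤ ε * dtot d0 / (10 * Real.sqrt 2 * (s : ℝ) * kappa d0))
    {h : Fin s → Fin K → ℂ} {x : Fin s → Fin N → ℂ}
    (hNF : inNF b a h0 x0 e d0 ρ μ dd ε h x) (hNe : inNeps h0 x0 d0 ε h x) :
    famFrob (fun i => Hmap h x i - Hmap h0 x0 i) < ε * dtot d0 / (Real.sqrt s * kappa d0) := by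
  set X := fun i => Hmap h x i - Hmap h0 x0 i
  set P := ε * dtot d0 / (Real.sqrt s * kappa d0)
  have hsκ := one_le_sqrt_card_mul_kappa d0 hd0 ⟨0, hs⟩
  have hκ : 0 < kappa d0 := pos_of_mul_pos_right (by linarith) (Real.sqrt_nonneg _)
  have hdt : 0 < dtot d0 := (hd0 _).trans_le (le_dtot d0 ⟨0, hs⟩)
  have hP : 0 < P := div_pos (by positivity) (by linarith)
  have hPdt : P ≤ ε * dtot d0 := div_le_self (by positivity) hsκ
  have hFtil : Ftil b a h0 x0 e ρ μ dd h x ≤ P ^ 2 / 3 + vnormSq e := by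
    have hrad : ε ^ 2 * dtot d0 ^ 2 / (3 * (s : ℝ) * kappa d0 ^ 2) = P ^ 2 / 3 := by
      simp only [P, div_pow, mul_pow, Real.sq_sqrt (Nat.cast_nonneg s)]; ring
    rw [← hrad]
    exact hNF
  have hρ0 : 0 < ρ := by nlinarith [vnormSq_nonneg e]
  have hF : Fobj b a h0 x0 e h x ≤ P ^ 2 / 3 + vnormSq e :=
    le_trans (le_add_of_nonneg_right (Finset.sum_nonneg fun _ _ => Gi_nonneg b hρ0.le _ _ _))
      hFtil
  -- `P ≤ ε d₀ ≤ d₀ / 15`, so the radius of `𝒩_F̃` is below `ρ / 2`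
  have hsmall : P ^ 2 / 3 + vnormSq e ≤ ρ / 2 := by
    have hPd : P ≤ dtot d0 / 15 := by nlinarith
    nlinarith [vnormSq_nonneg e]
  have hG : Greg b ρ μ dd h x ≤ ρ / 2 :=
    le_trans (le_add_of_nonneg_left (vnormSq_nonneg _)) (hFtil.trans hsmall)
  obtain ⟨hNd, hNmu⟩ := mem_Nd_and_Nmu_of_Greg_le b hd0 hdd hμ hρ0 hG
  have hRIPlow := (hRIP h x hNd hNmu hNe).1
  have hη : Real.sqrt 2 * AadjNorm b a e * Real.sqrt s ≤ P / 10 := by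
    have h2 : (0 : ℝ) < Real.sqrt 2 := by positivity
    have hs' : (0 : ℝ) < s := Nat.cast_pos.2 hs
    calc Real.sqrt 2 * AadjNorm b a e * Real.sqrt s
        ≤ Real.sqrt 2 * (ε * dtot d0 / (10 * Real.sqrt 2 * (s : ℝ) * kappa d0)) * Real.sqrt s := by
          gcongr
      _ = P / 10 := by
          simp only [P]; field_simp; exact Real.sq_sqrt hs'.le
  have hcross : ‖vinner e (calA b a X)‖ ≤ P / 10 * famFrob X :=
    (norm_vinner_calA_Hmap_sub_le b a h0 h x0 x e).trans <| by
      rw [← mul_assoc]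
      exact mul_le_mul_of_nonneg_right hη (Real.sqrt_nonneg _)
  refine lt_of_quadratic_bound hP ?_
  rw [famFrob_sq]
  linarith [Fobj_eq b a h0 x0 e h x, Complex.re_le_norm (vinner e (calA b a X))]

lemma deltaI_lt_of_mem_NF_of_mem_Neps (b : Fin L → Fin K → ℂ) (a : Fin s → Fin L → Fin N → ℂ)
    (h0 : Fin s → Fin K → ℂ) (x0 : Fin s → Fin N → ℂ) (hd0 : ∀ i, 0 < d0 i)
    (e : Fin L → ℂ) {μ ρ d ε : ℝ} {dd : Fin s → ℝ}
    (hμ : 0 < μ) (hε : 0 < ε) (hε15 : ε ≤ 1 / 15)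
    (hdd : ∀ i, 0.9 * d0 i ≤ dd i ∧ dd i ≤ 1.1 * d0 i)
    (hdlow : 0.9 * dtot d0 ≤ d) (hρ : d ^ 2 + 2 * vnormSq e ≤ ρ)
    (hRIP : LocalRIP b a h0 x0 d0 μ ε)
    (hAe : AadjNorm b a e ≤ ε * dtot d0 / (10 * Real.sqrt 2 * (s : ℝ) * kappa d0))
    {h : Fin s → Fin K → ℂ} {x : Fin s → Fin N → ℂ}
    (hNF : inNF b a h0 x0 e d0 ρ μ dd ε h x) (hNe : inNeps h0 x0 d0 ε h x) (i : Fin s) :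
    deltaI (h0 i) (x0 i) (d0 i) (h i) (x i) < ε := by
  have ht := famFrob_Hmap_sub_lt_of_mem_NF_of_mem_Neps d0 i.pos b a h0 x0 hd0 e hμ hε hε15 hdd
    hdlow hρ hRIP hAe hNF hNe
  have hsκ := one_le_sqrt_card_mul_kappa d0 hd0 i
  have hP : ε * dtot d0 / (Real.sqrt s * kappa d0) ≤ ε * d0 i := by
    rw [div_le_iff₀ (by linarith)]
    nlinarith [dtot_le_sqrt_card_mul_kappa_mul d0 hd0 i]
  have hblock : frob (Hmap h x i - Hmap h0 x0 i) ≤ famFrob fun i => Hmap h x i - Hmap h0 x0 i :=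
    Real.sqrt_le_sqrt <| Finset.single_le_sum (f := fun i => frobSq (Hmap h x i - Hmap h0 x0 i))
      (fun _ _ => frobSq_nonneg _) (Finset.mem_univ i)
  rw [deltaI, div_lt_iff₀ (hd0 i)]
  exact hblock.trans_lt (ht.trans_le hP)

end Gap

end RGD

lemma IsPreconnected.forall_le_of_le_imp_lt {X ι : Type*} [TopologicalSpace X] [Finite ι]
    {S : Set X} (hS : IsPreconnected S) {f : ι → X → ℝ} (hf : ∀ i, Continuous (f i)) {ε : ℝ}
    {x₀ : X} (hx₀ : x₀ ∈ S) (h₀ : ∀ i, f i x₀ ≤ ε)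
    (hgap : ∀ x ∈ S, (∀ i, f i x ≤ ε) → ∀ i, f i x < ε) :
    ∀ x ∈ S, ∀ i, f i x ≤ ε := by
  have hU : IsOpen {x | ∀ i, f i x < ε} := by
    simp only [Set.ofPred_forall]
    exact isOpen_iInter_of_finite fun i => isOpen_lt (hf i) continuous_const
  have hclosure : closure {x | ∀ i, f i x < ε} ⊆ {x | ∀ i, f i x ≤ ε} := by
    refine closure_minimal (fun x hx i => (hx i).le) ?_
    simp only [Set.ofPred_forall]
    exact isClosed_iInter fun i => isClosed_le (hf i) continuous_const
  have hSU := hS.subset_of_closure_inter_subset hU ⟨x₀, hx₀, hgap x₀ hx₀ h₀⟩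
    fun x ⟨hx, hxS⟩ => hgap x hxS (hclosure hx)
  exact fun x hx i => (hSU hx i).le

namespace RGD

lemma continuous_deltaI {X : Type*} [TopologicalSpace X] {K N : ℕ} (h0i : Fin K → ℂ)
    (x0i : Fin N → ℂ) (d0i : ℝ) {f : X → Fin K → ℂ} {g : X → Fin N → ℂ} (hf : Continuous f)
    (hg : Continuous g) :
    Continuous fun t => deltaI h0i x0i d0i (f t) (g t) := by
  simp only [deltaI, frob, frobSq, rankOne, Matrix.sub_apply, Matrix.of_apply]
  fun_prop

theorem statement2_general
    {K N L s : ℕ}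
    (b : Fin L → Fin K → ℂ)
    (a : Fin s → Fin L → Fin N → ℂ)
    (h0 : Fin s → Fin K → ℂ) (x0 : Fin s → Fin N → ℂ)
    (d0 : Fin s → ℝ) (hd0 : ∀ i, 0 < d0 i)
    (e : Fin L → ℂ) (μ ρ d ε : ℝ) (dd : Fin s → ℝ)
    (hμ : 0 < μ) (hε : 0 < ε) (hε15 : ε ≤ 1 / 15)
    (hdd : ∀ i, 0.9 * d0 i ≤ dd i ∧ dd i ≤ 1.1 * d0 i)
    (hdlow : 0.9 * dtot d0 ≤ d)
    (hρ : d ^ 2 + 2 * vnormSq e ≤ ρ)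
    (hRIP : LocalRIP b a h0 x0 d0 μ ε)
    (hAe : AadjNorm b a e ≤ ε * dtot d0 / (10 * Real.sqrt 2 * (s : ℝ) * kappa d0))
    (h1 : Fin s → Fin K → ℂ) (x1 : Fin s → Fin N → ℂ)
    (h2 : Fin s → Fin K → ℂ) (x2 : Fin s → Fin N → ℂ)
    (hz1 : inNeps h0 x0 d0 ε h1 x1)
    (hseg : ∀ lam : ℝ, lam ∈ Set.Icc (0 : ℝ) 1 →
      inNF b a h0 x0 e d0 ρ μ dd ε
        (fun i k => (1 - (lam : ℂ)) * h1 i k + (lam : ℂ) * h2 i k)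
        (fun i j => (1 - (lam : ℂ)) * x1 i j + (lam : ℂ) * x2 i j)) :
    inNeps h0 x0 d0 ε h2 x2 := by
  have hcont : ∀ i, Continuous fun lam : ℝ => deltaI (h0 i) (x0 i) (d0 i)
      (fun k => (1 - (lam : ℂ)) * h1 i k + (lam : ℂ) * h2 i k)
      (fun j => (1 - (lam : ℂ)) * x1 i j + (lam : ℂ) * x2 i j) := fun i =>
    continuous_deltaI _ _ _ (continuous_pi fun _ => by fun_prop)
      (continuous_pi fun _ => by fun_prop)
  have hstart : ∀ i, deltaI (h0 i) (x0 i) (d0 i)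
      (fun k => (1 - ((0 : ℝ) : ℂ)) * h1 i k + ((0 : ℝ) : ℂ) * h2 i k)
      (fun j => (1 - ((0 : ℝ) : ℂ)) * x1 i j + ((0 : ℝ) : ℂ) * x2 i j) ≤ ε := by
    simp only [Complex.ofReal_zero, sub_zero, one_mul, zero_mul, add_zero]
    exact hz1
  have hend := isPreconnected_Icc.forall_le_of_le_imp_lt hcont (Set.left_mem_Icc.2 zero_le_one)
    hstart (fun lam hlam hle => deltaI_lt_of_mem_NF_of_mem_Neps d0 b a h0 x0 hd0 e hμ hε hε15
      hdd hdlow hρ hRIP hAe (hseg lam hlam) hle) 1 (Set.right_mem_Icc.2 zero_le_one)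
  simp only [Complex.ofReal_one, sub_self, zero_mul, one_mul, zero_add] at hend
  exact hend

/-- segment lemma. -/
theorem statement2
    {K N L s : ℕ} (hK : 0 < K) (hN : 0 < N) (hL : 0 < L) (hs : 0 < s)
    (b : Fin L → Fin K → ℂ) (hb : BtBeqI b)
    (a : Fin s → Fin L → Fin N → ℂ)
    (h0 : Fin s → Fin K → ℂ) (x0 : Fin s → Fin N → ℂ)
    (d0 : Fin s → ℝ) (hd0 : ∀ i, 0 < d0 i)
    (hh0 : ∀ i, vnorm (h0 i) = Real.sqrt (d0 i))
    (hx0 : ∀ i, vnorm (x0 i) = Real.sqrt (d0 i))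
    (e : Fin L → ℂ) (μ ρ d ε : ℝ) (dd : Fin s → ℝ)
    (hμ : 0 < μ) (hε : 0 < ε) (hε15 : ε ≤ 1 / 15)
    (hdd : ∀ i, 0.9 * d0 i ≤ dd i ∧ dd i ≤ 1.1 * d0 i)
    (hdlow : 0.9 * dtot d0 ≤ d) (hdhigh : d ≤ 1.1 * dtot d0)
    (hρ : d ^ 2 + 2 * vnormSq e ≤ ρ)
    (hRIP : LocalRIP b a h0 x0 d0 μ ε)
    (hAe : AadjNorm b a e ≤ ε * dtot d0 / (10 * Real.sqrt 2 * (s : ℝ) * kappa d0))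
    (h1 : Fin s → Fin K → ℂ) (x1 : Fin s → Fin N → ℂ)
    (h2 : Fin s → Fin K → ℂ) (x2 : Fin s → Fin N → ℂ)
    (hz1 : inNeps h0 x0 d0 ε h1 x1)
    (hseg : ∀ lam : ℝ, lam ∈ Set.Icc (0 : ℝ) 1 →
      inNF b a h0 x0 e d0 ρ μ dd ε
        (fun i k => (1 - (lam : ℂ)) * h1 i k + (lam : ℂ) * h2 i k)
        (fun i j => (1 - (lam : ℂ)) * x1 i j + (lam : ℂ) * x2 i j)) :
    inNeps h0 x0 d0 ε h2 x2 :=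
  statement2_general b a h0 x0 d0 hd0 e μ ρ d ε dd hμ hε hε15 hdd hdlow hρ hRIP hAe h1 x1 h2 x2 hz1
    hseg

end RGD
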